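/- Let ω = (√(i(i+4)) − i)/(2i), γ = i²(2i+3)ω³ / ((2(i+1)+3iω)/(i+4)). Then ω³·G₄ < (i+1)/γ where G₄ = i²(i²+3i+1), and also 1/i − ω/γ < F₂/F₄ = 2i/(i²(2i+3)) = 2/(i(2i+3)). -/

import Mathlib

/-!
With `x = i`, `ω` is the positive root of `x t² + x t = 1`, so every polynomial in `ω` reduces
to one that is linear in `ω`. Once `γ` is cleared, both inequalities become lower bounds
`N < D ω` with `N`, `D` polynomials in `x`. Since `t ↦ x t² + x t` is increasing on `t ≥ 0`,
such a bound follows from the polynomial inequality `x N² + x N D < D²`; for the first bound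
this has only positive coefficients when expanded in `x - 2`.
-/

open Real

theorem lt_mul_of_root_of_quadratic_lt {a b ω N D : ℝ} (ha : 0 ≤ a) (hb : 0 ≤ b) (hω : 0 ≤ ω)
    (hD : 0 < D) (hroot : a * ω ^ 2 + b * ω = 1) (h : a * N ^ 2 + b * N * D < D ^ 2) :
    N < D * ω := by
  by_contra! hle
  have hDω : 0 ≤ D * ω := mul_nonneg hD.le hω
  have : D ^ 2 ≤ a * N ^ 2 + b * N * D := calc
    D ^ 2 = a * (D * ω) ^ 2 + b * (D * ω) * D := by linear_combination -D ^ 2 * hroot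
    _ ≤ a * N ^ 2 + b * N * D := by gcongr
  linarith

section

variable {x ω : ℝ}

theorem quadratic_of_eq_sqrt (hx : 0 < x) (hω : ω = (√(x * (x + 4)) - x) / (2 * x)) :
    x * ω ^ 2 + x * ω = 1 := by
  have hs : √(x * (x + 4)) ^ 2 = x * (x + 4) := sq_sqrt (by positivity)
  have hlin : 2 * x * ω + x = √(x * (x + 4)) := by
    rw [hω]
    field_simp
    ring
  have h4x : (4 * x) * (x * ω ^ 2 + x * ω) = 4 * x := by
    linear_combination (2 * x * ω + x + √(x * (x + 4))) * hlin + hs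
  exact mul_left_cancel₀ (by positivity) (h4x.trans (mul_one _).symm)

theorem pos_of_eq_sqrt (hx : 0 < x) (hω : ω = (√(x * (x + 4)) - x) / (2 * x)) : 0 < ω := by
  rw [hω]
  refine div_pos (sub_pos.2 ?_) (by positivity)
  exact lt_sqrt_of_sq_lt (by nlinarith)

variable (hq : x * ω ^ 2 + x * ω = 1)
include hq

theorem sq_mul_pow_three_eq : x ^ 2 * ω ^ 3 = x * ((x + 1) * ω - 1) := by
  linear_combination (x * ω - x) * hq

theorem pow_four_mul_pow_six_eq :
    x ^ 4 * ω ^ 6 = x * ((x ^ 2 + 3 * x + 1) - x * (x + 1) * (x + 3) * ω) := by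
  rw [show x ^ 4 * ω ^ 6 = (x ^ 2 * ω ^ 3) ^ 2 by ring, sq_mul_pow_three_eq hq]
  linear_combination x * (x + 1) ^ 2 * hq

theorem pow_four_mul_pow_six_mul_lt (hx : 2 ≤ x) (hω : 0 ≤ ω) :
    x ^ 4 * ω ^ 6 * ((2 * x + 3) * (x + 4) * (x ^ 2 + 3 * x + 1))
      < (x + 1) * (2 * (x + 1) + 3 * x * ω) := by
  set K := (2 * x + 3) * (x + 4) * (x ^ 2 + 3 * x + 1) with hK
  have hbound : x * K * (x ^ 2 + 3 * x + 1) - 2 * (x + 1) ^ 2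
      < x * (x + 1) * (x * K * (x + 3) + 3) * ω := by
    refine lt_mul_of_root_of_quadratic_lt (by positivity) (by positivity) hω (by positivity) hq ?_
    obtain ⟨t, ht, rfl⟩ : ∃ t, 0 ≤ t ∧ x = t + 2 := ⟨x - 2, by linarith, by ring⟩
    rw [← sub_pos, hK]
    ring_nf
    positivity
  rw [pow_four_mul_pow_six_eq hq]
  linarith

theorem mul_sq_lt (hx : 1 < 2 * x) (hω : 0 ≤ ω) :
    (2 * x + 1) * (x + 4) * (x * ω ^ 2) < 2 * (x + 1) + 3 * x * ω := by
  have hx0 : 0 < x := by linarith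
  have hbound : 2 * x ^ 2 + 7 * x + 2 < x * (2 * x + 7) * (x + 1) * ω := by
    refine lt_mul_of_root_of_quadratic_lt hx0.le hx0.le hω (by positivity) hq ?_
    have h2x : 0 < 2 * x - 1 := by linarith
    have : 0 < x * (2 * x - 1) * (x + 4) := by positivity
    linear_combination this
  linear_combination hbound + (2 * x + 1) * (x + 4) * hq

end

theorem gamma_inequalities_2 (i : ℕ) (hi : 2 ≤ i)
    (ω : ℝ) (hω : ω = (Real.sqrt (i * (i + 4)) - i) / (2 * i))
    (γ : ℝ) (hγ : γ = ((i : ℝ) ^ 2 * (2 * i + 3) * ω ^ 3) / ((2 * ((i : ℝ) + 1) + 3 * i * ω) / (i + 4))) :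
    ω ^ 3 * ((i : ℝ) ^ 2 * ((i : ℝ) ^ 2 + 3 * i + 1)) < ((i : ℝ) + 1) / γ ∧
    1 / (i : ℝ) - ω / γ < 2 * (i : ℝ) / ((i : ℝ) ^ 2 * (2 * i + 3)) := by
  have hx : (2 : ℝ) ≤ i := by exact_mod_cast hi
  set x : ℝ := (i : ℝ)
  have hx0 : 0 < x := by linarith
  have hq := quadratic_of_eq_sqrt hx0 hω
  have hω0 := pos_of_eq_sqrt hx0 hω
  have hγ0 : 0 < γ := by
    rw [hγ]
    positivity
  constructor
  · rw [lt_div_iff₀ hγ0, hγ]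
    field_simp
    linarith [pow_four_mul_pow_six_mul_lt hq hx hω0.le]
  · rw [hγ]
    field_simp
    linarith [mul_sq_lt hq (by linarith) hω0.le]
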